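/- For every integer k, the function ω_k : ℝ³ → ℂ defined by ω_k(a,b,c) = exp(2πi·k·{a}·({b} + {c} − {b+c})), where {x} denotes the fractional part of x, satisfies the group 3-cocycle identity: for all real numbers a, b, c, d, ω_k(b,c,d) · ω_k(a+b,c,d)⁻¹ · ω_k(a,b+c,d) · ω_k(a,b,c+d)⁻¹ · ω_k(a,b,c) = 1. (Since ω_k(a,b,c) depends only on a, b, c modulo 1, this says that ω_k defines a U(1)-valued group 3-cocycle on the group U(1) = ℝ/ℤ.) -/
import Mathlib


open Complex

/-- The level-`k` group 3-cochain `ω_k(a,b,c) = exp(2πik·{a}·({b}+{c}-{b+c}))` on `ℝ`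
(descending to `U(1) = ℝ/ℤ`). -/
noncomputable def omegaCocycle (k : ℤ) (a b c : ℝ) : ℂ :=
  Complex.exp (2 * Real.pi * Complex.I * (k : ℂ) * ((Int.fract a : ℝ) : ℂ) *
    (((Int.fract b : ℝ) : ℂ) + ((Int.fract c : ℝ) : ℂ) - ((Int.fract (b + c) : ℝ) : ℂ)))

theorem omegaCocycle_is_cocycle (k : ℤ) (a b c d : ℝ) :
    omegaCocycle k b c d * (omegaCocycle k (a + b) c d)⁻¹ * omegaCocycle k a (b + c) d *
        (omegaCocycle k a b (c + d))⁻¹ * omegaCocycle k a b c = 1 := by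
  simp only [omegaCocycle, ← Complex.exp_neg, ← Complex.exp_add]
  rw [show b + (c + d) = b + c + d from (add_assoc b c d).symm]
  rw [Complex.exp_eq_one_iff]
  refine ⟨k * (⌊a+b⌋ - ⌊a⌋ - ⌊b⌋) * (⌊c+d⌋ - ⌊c⌋ - ⌊d⌋), ?_⟩
  have h : ∀ x : ℝ, (Int.fract x : ℝ) = x - (⌊x⌋ : ℤ) := fun x => rfl
  simp only [h]
  push_cast
  ring
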